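/- For integers n ≥ 2, d ≥ 0 and natural numbers k ≠ 1, define B(n,d,k) = −(π^{d/2}·(n−1)/4)·Γ((d+2)/2)·Γ((k−1)/2)·Γ((n+k−1)/2)/(Γ((d+k+1)/2)·Γ((n+d+k+1)/2)). Then B(n,0,k) = (n−1)/((1−k)(n−1+k)), and B satisfies the recurrence B(n,d+2,k) = (2π/(n+d+2k)) · (B(n,d,k) − B(n,d,k+2)). -/

import Mathlib

/-!
Every Gamma factor of `multB` whose argument moves by one when `d` or `k` grows by two is
rewritten with `Γ(x + 1) = x Γ(x)`, so `multB n (d + 2) k` and `multB n d (k + 2)` are explicit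
rational multiples of `multB n d k`; at `d = 0` the same identity leaves only the ratios
`Γ(x) / Γ(x + 1) = 1 / x`, giving the initial value. The recurrence then reduces to the
polynomial identity
`(d + k + 1)(n + d + k + 1) - (k - 1)(n + k - 1) = (d + 2)(n + d + 2k)`.
-/

/-- The closed-form multiplier `B(n,d,k) = a^{n,d}_k = a_k^{n+d}[g_n]` of C. Berg's
function `g_n` in dimension `n+d`. -/
noncomputable def multB (n d k : ℕ) : ℝ :=
  -(Real.pi ^ ((d : ℝ) / 2) * ((n : ℝ) - 1) / 4) *
    Real.Gamma (((d : ℝ) + 2) / 2) * Real.Gamma (((k : ℝ) - 1) / 2) *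
    Real.Gamma (((n : ℝ) + (k : ℝ) - 1) / 2) /
    (Real.Gamma (((d : ℝ) + (k : ℝ) + 1) / 2) *
      Real.Gamma (((n : ℝ) + (d : ℝ) + (k : ℝ) + 1) / 2))

open Real

lemma Real.Gamma_div_Gamma_add_one {x : ℝ} (hx : -1 < x) : Gamma x / Gamma (x + 1) = x⁻¹ := by
  -- at `x = 0` both sides are junk zeros: `Gamma 0 = 0` and `0⁻¹ = 0`
  rcases eq_or_ne x 0 with rfl | hx0
  · simp
  have hΓ : Gamma x ≠ 0 := Gamma_ne_zero fun m hm => by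
    rcases m with _ | m
    · simp_all
    · push_cast at hm; linarith
  rw [Gamma_add_one hx0]
  field_simp

lemma multB_zero_left (n k : ℕ) :
    multB n 0 k = ((n : ℝ) - 1) / ((1 - (k : ℝ)) * ((n : ℝ) - 1 + (k : ℝ))) := by
  have hratio : multB n 0 k = -(((n : ℝ) - 1) / 4)
      * (Gamma (((k : ℝ) - 1) / 2) / Gamma (((k : ℝ) - 1) / 2 + 1))
      * (Gamma (((n : ℝ) + k - 1) / 2) / Gamma (((n : ℝ) + k - 1) / 2 + 1)) := by
    simp only [multB, CharP.cast_eq_zero, zero_div, rpow_zero, zero_add, add_zero]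
    rw [div_self (two_ne_zero' ℝ), Gamma_one,
      show ((k : ℝ) + 1) / 2 = ((k : ℝ) - 1) / 2 + 1 by ring,
      show ((n : ℝ) + k + 1) / 2 = ((n : ℝ) + k - 1) / 2 + 1 by ring]
    ring
  have hk : (-1 : ℝ) < ((k : ℝ) - 1) / 2 := by have := k.cast_nonneg (α := ℝ); linarith
  have hnk : (-1 : ℝ) < ((n : ℝ) + k - 1) / 2 := by
    have := n.cast_nonneg (α := ℝ); have := k.cast_nonneg (α := ℝ); linarith
  rw [hratio, Gamma_div_Gamma_add_one hk, Gamma_div_Gamma_add_one hnk, inv_div, inv_div,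
    show (1 - (k : ℝ)) * ((n : ℝ) - 1 + k) = -(((k : ℝ) - 1) * (n + k - 1)) by ring,
    div_neg, div_mul_eq_div_div]
  ring

lemma multB_add_two_left (n d k : ℕ) :
    multB n (d + 2) k
      = 2 * π * ((d : ℝ) + 2) / (((d : ℝ) + k + 1) * ((n : ℝ) + d + k + 1))
        * multB n d k := by
  have hd := Gamma_add_one (s := ((d : ℝ) + 2) / 2) (by positivity)
  have hdk := Gamma_add_one (s := ((d : ℝ) + k + 1) / 2) (by positivity)
  have hndk := Gamma_add_one (s := ((n : ℝ) + d + k + 1) / 2) (by positivity)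
  have hπ : π ^ (((d : ℝ) + 2) / 2) = π ^ ((d : ℝ) / 2) * π := by
    rw [add_div, div_self two_ne_zero, rpow_add_one pi_ne_zero]
  have := (Gamma_pos_of_pos (s := ((d : ℝ) + k + 1) / 2) (by positivity)).ne'
  have := (Gamma_pos_of_pos (s := ((n : ℝ) + d + k + 1) / 2) (by positivity)).ne'
  simp only [multB, Nat.cast_add, Nat.cast_ofNat]
  rw [show ((d : ℝ) + 2 + 2) / 2 = ((d : ℝ) + 2) / 2 + 1 by ring,
    show ((d : ℝ) + 2 + k + 1) / 2 = ((d : ℝ) + k + 1) / 2 + 1 by ring,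
    show ((n : ℝ) + (d + 2) + k + 1) / 2 = ((n : ℝ) + d + k + 1) / 2 + 1 by ring,
    hd, hdk, hndk, hπ]
  field_simp

lemma multB_add_two_right (n d : ℕ) {k : ℕ} (hk : k ≠ 1) (hnk : n + k ≠ 1) :
    multB n d (k + 2)
      = ((k : ℝ) - 1) * ((n : ℝ) + k - 1) / (((d : ℝ) + k + 1) * ((n : ℝ) + d + k + 1))
        * multB n d k := by
  have hk' : ((k : ℝ) - 1) / 2 ≠ 0 := by
    rw [div_ne_zero_iff, sub_ne_zero]; exact ⟨mod_cast hk, two_ne_zero⟩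
  have hnk' : ((n : ℝ) + k - 1) / 2 ≠ 0 := by
    rw [div_ne_zero_iff, sub_ne_zero]; exact ⟨mod_cast hnk, two_ne_zero⟩
  have hk1 := Gamma_add_one hk'
  have hnk1 := Gamma_add_one hnk'
  have hdk := Gamma_add_one (s := ((d : ℝ) + k + 1) / 2) (by positivity)
  have hndk := Gamma_add_one (s := ((n : ℝ) + d + k + 1) / 2) (by positivity)
  have := (Gamma_pos_of_pos (s := ((d : ℝ) + k + 1) / 2) (by positivity)).ne'
  have := (Gamma_pos_of_pos (s := ((n : ℝ) + d + k + 1) / 2) (by positivity)).ne'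
  simp only [multB, Nat.cast_add, Nat.cast_ofNat]
  rw [show ((k : ℝ) + 2 - 1) / 2 = ((k : ℝ) - 1) / 2 + 1 by ring,
    show ((n : ℝ) + (k + 2) - 1) / 2 = ((n : ℝ) + k - 1) / 2 + 1 by ring,
    show ((d : ℝ) + (k + 2) + 1) / 2 = ((d : ℝ) + k + 1) / 2 + 1 by ring,
    show ((n : ℝ) + d + (k + 2) + 1) / 2 = ((n : ℝ) + d + k + 1) / 2 + 1 by ring,
    hk1, hnk1, hdk, hndk]
  field_simp

/-- `B(n,0,k) = (n−1)/((1−k)(n−1+k))` and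
`B(n,d+2,k) = (2π/(n+d+2k)) (B(n,d,k) − B(n,d,k+2))`. -/
theorem multB_initial_and_recurrence (n : ℕ) (hn : 2 ≤ n) (d : ℕ) (k : ℕ) (hk : k ≠ 1) :
    multB n 0 k = ((n : ℝ) - 1) / ((1 - (k : ℝ)) * ((n : ℝ) - 1 + (k : ℝ))) ∧
    multB n (d + 2) k
        = (2 * Real.pi / ((n : ℝ) + (d : ℝ) + 2 * (k : ℝ))) *
            (multB n d k - multB n d (k + 2)) := by
  refine ⟨multB_zero_left n k, ?_⟩
  rw [multB_add_two_left, multB_add_two_right n d hk (by omega)]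
  have : (n : ℝ) + d + 2 * k ≠ 0 := by positivity
  have : (d : ℝ) + k + 1 ≠ 0 := by positivity
  have : (n : ℝ) + d + k + 1 ≠ 0 := by positivity
  field_simp
  ring
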